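/- arXiv:1809.07298 — 6 statements merged into one kernel-verified Lean document; each statement's English description precedes it below -/
import Mathlib

section
/- Let L be a lattice in R^{n+1} invariant under the reflection σ(x,y) = (x,−y). If (p,q) ∈ L with 0 < q ≤ y_0, then p is a period of the projection P(L ∩ B), where P(x,y)=x and B = {(x,y) : 0 ≤ y ≤ y_0}. -/
/-- A lattice in a real vector space: the ℤ-span of `m` linearly independent vectors. -/
def IsLatticeIn {V : Type*} [AddCommGroup V] [Module ℝ V] (m : ℕ) (L : Set V) : Prop :=
  ∃ b : Fin m → V, LinearIndependent ℝ b ∧ L = (Submodule.span ℤ (Set.range b) : Set V)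

/-- The projection `P(L ∩ B_{y₀})` of the part of `L` in the band `0 ≤ y ≤ y₀`. -/
def projBand (n : ℕ) (L : Set ((Fin n → ℝ) × ℝ)) (y₀ : ℝ) : Set (Fin n → ℝ) :=
  {x | ∃ y : ℝ, 0 ≤ y ∧ y ≤ y₀ ∧ ((x, y) : _ × ℝ) ∈ L}

/-- The reflection `σ(x,y) = (x,-y)`. -/
def sigmaRefl (n : ℕ) : ((Fin n → ℝ) × ℝ) → ((Fin n → ℝ) × ℝ) := fun v => (v.1, -v.2)

/-! Adding the lattice vector `σ(p, q) = (p, -q)` to a point of `L` at height `y ∈ [0, y₀]`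
lands at height `y - q ∈ [-y₀, y₀]`, and `σ`-invariance folds `[-y₀, 0]` back onto the band. -/

theorem IsLatticeIn.add_mem {V : Type*} [AddCommGroup V] [Module ℝ V] {m : ℕ} {L : Set V}
    (hL : IsLatticeIn m L) {u v : V} (hu : u ∈ L) (hv : v ∈ L) : u + v ∈ L := by
  obtain ⟨b, -, rfl⟩ := hL
  exact Submodule.add_mem _ hu hv

theorem sigmaRefl_mem {n : ℕ} {L : Set ((Fin n → ℝ) × ℝ)} (hσ : sigmaRefl n '' L = L)
    {v : (Fin n → ℝ) × ℝ} (hv : v ∈ L) : sigmaRefl n v ∈ L :=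
  hσ ▸ Set.mem_image_of_mem _ hv

theorem mem_projBand_of_abs_le {n : ℕ} {L : Set ((Fin n → ℝ) × ℝ)} {y₀ : ℝ}
    (hσ : sigmaRefl n '' L = L) {x : Fin n → ℝ} {y : ℝ} (hxy : ((x, y) : _ × ℝ) ∈ L)
    (hy : |y| ≤ y₀) : x ∈ projBand n L y₀ := by
  rcases le_total 0 y with hy0 | hy0
  · exact ⟨y, hy0, (le_abs_self y).trans hy, hxy⟩
  · exact ⟨-y, neg_nonneg.2 hy0, (neg_le_abs y).trans hy, sigmaRefl_mem hσ hxy⟩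

theorem period_of_sigma_invariant_general (n : ℕ)
    (L : Set ((Fin n → ℝ) × ℝ)) (hL : IsLatticeIn (n + 1) L)
    (hσ : sigmaRefl n '' L = L)
    (y₀ : ℝ)
    (p : Fin n → ℝ) (q : ℝ) (hq0 : 0 < q) (hqy : q ≤ y₀)
    (hpq : ((p, q) : _ × ℝ) ∈ L) :
    ∀ x ∈ projBand n L y₀, x + p ∈ projBand n L y₀ := by
  rintro x ⟨y, hy0, hyy, hxy⟩
  have hpq' : ((p, -q) : _ × ℝ) ∈ L := sigmaRefl_mem hσ hpq
  have hsum : ((x + p, y - q) : _ × ℝ) ∈ L := by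
    simpa only [Prod.mk_add_mk, ← sub_eq_add_neg] using hL.add_mem hxy hpq'
  exact mem_projBand_of_abs_le hσ hsum (abs_sub_le_iff.2 ⟨by linarith, by linarith⟩)

theorem period_of_sigma_invariant (n : ℕ)
    (L : Set ((Fin n → ℝ) × ℝ)) (hL : IsLatticeIn (n + 1) L)
    (hσ : sigmaRefl n '' L = L)
    (y₀ : ℝ) (hy₀ : 0 < y₀)
    (p : Fin n → ℝ) (q : ℝ) (hq0 : 0 < q) (hqy : q ≤ y₀)
    (hpq : ((p, q) : _ × ℝ) ∈ L) :
    ∀ x ∈ projBand n L y₀, x + p ∈ projBand n L y₀ :=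
  period_of_sigma_invariant_general n L hL hσ y₀ p q hq0 hqy hpq
end

section
/- Let L be a lattice in R^{n+1} invariant under σ(x,y) = (x,−y). Then the restriction R_0(L) = {x ∈ R^n : (x,0) ∈ L} is a lattice in R^n, i.e., a Z-module generated by n linearly independent vectors. -/
/-!
Write `L = span ℤ B` for a real basis `B`, so that `L` is a discrete subgroup spanning
`ℝⁿ × ℝ`. Its preimage `R₀(L)` under the closed embedding `x ↦ (x, 0)` is again discrete.
It also spans `ℝⁿ`: for `v ∈ L`, σ-invariance gives `v + σ v = (2 v.1, 0) ∈ L`, so the first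
components of `L`, which span `ℝⁿ`, lie in the real span of `R₀(L)`. A discrete subgroup
spanning `ℝⁿ` is free of rank `n`, and a `ℤ`-basis of it is `ℝ`-linearly independent.
-/

open Module Submodule

theorem IsLatticeIn.exists_basis {V : Type*} [AddCommGroup V] [Module ℝ V]
    [FiniteDimensional ℝ V] {m : ℕ} {L : Set V} (hL : IsLatticeIn m L)
    (hm : finrank ℝ V = m) :
    ∃ B : Basis (Fin m) ℝ V, L = span ℤ (Set.range B) := by
  obtain ⟨b, hb, rfl⟩ := hL
  exact ⟨basisOfLinearIndependentOfCardEqFinrank' b hb (by simp [hm]), by simp⟩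

theorem isLatticeIn_finrank_of_isZLattice {E : Type*} [NormedAddCommGroup E]
    [NormedSpace ℝ E] [FiniteDimensional ℝ E] (M : Submodule ℤ E) [DiscreteTopology M]
    [IsZLattice ℝ M] : IsLatticeIn (finrank ℝ E) (M : Set E) := by
  have hcard : Fintype.card (Free.ChooseBasisIndex ℤ M) = finrank ℝ E := by
    rw [← finrank_eq_card_chooseBasisIndex, ZLattice.rank ℝ M]
  let b := (Free.chooseBasis ℤ M).reindex (Fintype.equivFinOfCardEq hcard)
  exact ⟨b.ofZLatticeBasis ℝ M, (b.ofZLatticeBasis ℝ M).linearIndependent,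
    by rw [b.ofZLatticeBasis_span ℝ]⟩

theorem span_comap_inl_eq_top_of_reflection_mem {E F : Type*} [AddCommGroup E] [Module ℝ E]
    [AddCommGroup F] [Module ℝ F] (L : Submodule ℤ (E × F))
    (hspan : span ℝ (L : Set (E × F)) = ⊤) (hσ : ∀ v ∈ L, (v.1, -v.2) ∈ L) :
    span ℝ (L.comap (LinearMap.inl ℤ E F) : Set E) = ⊤ := by
  have hfst : span ℝ (Prod.fst '' (L : Set (E × F))) = ⊤ := by
    rw [← LinearMap.coe_fst (R := ℝ), ← map_span, hspan, Submodule.map_top,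
      LinearMap.range_eq_top]
    exact LinearMap.fst_surjective
  rw [eq_top_iff, ← hfst, span_le]
  rintro _ ⟨v, hv, rfl⟩
  have hdouble : (2 : ℝ) • v.1 ∈ L.comap (LinearMap.inl ℤ E F) := by
    have hsum : v + (v.1, -v.2) = ((2 : ℝ) • v.1, 0) := by
      ext <;> simp [two_smul]
    simpa [← hsum] using L.add_mem hv (hσ v hv)
  have hhalf : v.1 = (2⁻¹ : ℝ) • (2 : ℝ) • v.1 := by norm_num [smul_smul]
  rw [SetLike.mem_coe, hhalf]
  exact smul_mem _ _ (subset_span hdouble)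

theorem restriction_is_lattice (n : ℕ)
    (L : Set ((Fin n → ℝ) × ℝ)) (hL : IsLatticeIn (n + 1) L)
    (hσ : sigmaRefl n '' L = L) :
    IsLatticeIn n {x : Fin n → ℝ | ((x, (0 : ℝ)) : _ × ℝ) ∈ L} := by
  obtain ⟨B, rfl⟩ := hL.exists_basis (by simp)
  let M := ZLattice.comap ℝ (span ℤ (Set.range B)) (LinearMap.inl ℝ (Fin n → ℝ) ℝ)
  have : DiscreteTopology M :=
    ZLattice.comap_discreteTopology ℝ _ (continuous_id.prodMk continuous_const)
      LinearMap.inl_injective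
  have : IsZLattice ℝ M := ⟨span_comap_inl_eq_top_of_reflection_mem _ (ZSpan.span_top B)
    fun v hv ↦ hσ.subset ⟨v, hv, rfl⟩⟩
  have hM := isLatticeIn_finrank_of_isZLattice M
  rwa [finrank_fin_fun] at hM
end

section
/- Let L be a lattice in R^{n+1} with (p,0) ∉ L for a given p ∈ R^n, and suppose (0,b) ∈ L and (p,q) ∈ L with b > 0. Fix adapted generators {(0,b_0), (a_1,b_1), …, (a_n,b_n)} of L with m_* a_1 = p for some positive integer m_*. Then p is a period of P(L ∩ B_{y_0}) if and only if the following diophantine condition holds: for all integers m_1,…,m_n, if Σ m_i b_i ∈ [0,y_0] (mod b_0) then m_* b_1 + Σ m_i b_i ∈ [0,y_0] (mod b_0). -/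
/-- `z ∈ [0, y₀] (mod b₀)`. -/
def inBandMod (z y₀ b₀ : ℝ) : Prop := ∃ k : ℤ, 0 ≤ z + k * b₀ ∧ z + k * b₀ ≤ y₀

/-!
A point of `L` is `k • (0, b₀) + ∑ cᵢ • (aᵢ, bᵢ)`, and by linear independence its abscissa
`∑ cᵢ aᵢ` determines `c`. Hence `∑ cᵢ aᵢ` lies in `P(L ∩ B_{y₀})` exactly when
`∑ cᵢ bᵢ ∈ [0, y₀] (mod b₀)`, and since `p = m_* a₁`, translating by `p` replaces `c` by
`c + m_* e₁`, which adds `m_* b₁` to that height.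
-/

open Function

variable {ι E : Type*} [Fintype ι] [AddCommGroup E]

section
variable {R : Type*} [Ring R] [Module R E]

theorem LinearIndependent.injective_sum_intCast_smul [CharZero R] {a : ι → E}
    (ha : LinearIndependent R a) :
    Injective fun c : ι → ℤ => ∑ i, (c i : R) • a i :=
  ha.fintypeLinearCombination_injective.comp fun _ _ h =>
    funext fun i => Int.cast_injective (congrFun h i)

theorem sum_intCast_add_single_smul [DecidableEq ι] (v : ι → E) (c : ι → ℤ) (i₀ : ι) (m : ℤ) :
    ∑ i, ((c + Pi.single i₀ m : ι → ℤ) i : R) • v i = ∑ i, (c i : R) • v i + (m : R) • v i₀ := by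
  simp [add_smul, Finset.sum_add_distrib, Pi.single_apply]

end

theorem mem_span_insert_vertical_iff [Module ℝ E] (b₀ : ℝ) (a : ι → E) (bv : ι → ℝ)
    (x : E) (y : ℝ) :
    (x, y) ∈ Submodule.span ℤ (insert ((0 : E), b₀) (Set.range fun i => (a i, bv i))) ↔
      ∃ (k : ℤ) (c : ι → ℤ), x = ∑ i, (c i : ℝ) • a i ∧ y = k * b₀ + ∑ i, (c i : ℝ) * bv i := by
  simp only [Submodule.mem_span_insert, Submodule.mem_span_range_iff_exists_fun]
  constructor
  · rintro ⟨k, _, ⟨c, rfl⟩, hxy⟩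
    refine ⟨k, c, ?_, ?_⟩
    · simpa [Int.cast_smul_eq_zsmul, Prod.fst_sum] using congrArg Prod.fst hxy
    · simpa [Int.cast_smul_eq_zsmul, Prod.snd_sum, mul_comm] using congrArg Prod.snd hxy
  · rintro ⟨k, c, rfl, rfl⟩
    refine ⟨k, _, ⟨c, rfl⟩, ?_⟩
    ext <;> simp [Int.cast_smul_eq_zsmul, Prod.fst_sum, Prod.snd_sum, mul_comm]

theorem mem_projBand_span_iff {n : ℕ} (y₀ b₀ : ℝ) (a : ι → Fin n → ℝ) (bv : ι → ℝ)
    (x : Fin n → ℝ) :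
    x ∈ projBand n (Submodule.span ℤ (insert ((0 : Fin n → ℝ), b₀)
        (Set.range fun i => (a i, bv i))) : Set _) y₀ ↔
      ∃ c : ι → ℤ, x = ∑ i, (c i : ℝ) • a i ∧ inBandMod (∑ i, (c i : ℝ) * bv i) y₀ b₀ := by
  simp only [projBand, Set.mem_ofPred_eq, SetLike.mem_coe, mem_span_insert_vertical_iff]
  constructor
  · rintro ⟨_, h₀, h₁, k, c, rfl, rfl⟩
    exact ⟨c, rfl, k, by linarith, by linarith⟩
  · rintro ⟨c, rfl, k, h₀, h₁⟩
    exact ⟨_, h₀, h₁, k, c, rfl, by ring⟩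

theorem period_iff_diophantine_general (n : ℕ) [NeZero n]
    (y₀ : ℝ) (b₀ : ℝ)
    (a : Fin n → (Fin n → ℝ)) (bv : Fin n → ℝ) (ha : LinearIndependent ℝ a)
    (L : Set ((Fin n → ℝ) × ℝ))
    (hL : L = (Submodule.span ℤ (insert ((0 : Fin n → ℝ), b₀)
          (Set.range fun i : Fin n => ((a i, bv i) : _ × ℝ))) : Set _))
    (p : Fin n → ℝ) (m' : ℤ) (hpa : (m' : ℝ) • a 0 = p) :
    (∀ x ∈ projBand n L y₀, x + p ∈ projBand n L y₀) ↔
      (∀ m : Fin n → ℤ,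
        inBandMod (∑ i, (m i : ℝ) * bv i) y₀ b₀ →
        inBandMod ((m' : ℝ) * bv 0 + ∑ i, (m i : ℝ) * bv i) y₀ b₀) := by
  subst hL
  simp only [mem_projBand_span_iff]
  have shift_a (c : Fin n → ℤ) :
      ∑ i, ((c + Pi.single 0 m' : Fin n → ℤ) i : ℝ) • a i = ∑ i, (c i : ℝ) • a i + p := by
    rw [sum_intCast_add_single_smul, hpa]
  have shift_b (c : Fin n → ℤ) :
      ∑ i, ((c + Pi.single 0 m' : Fin n → ℤ) i : ℝ) * bv i
        = m' * bv 0 + ∑ i, (c i : ℝ) * bv i := by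
    simpa only [smul_eq_mul, add_comm] using sum_intCast_add_single_smul (R := ℝ) bv c 0 m'
  constructor
  · intro hper m hm
    obtain ⟨d, hd, hband⟩ := hper _ ⟨m, rfl, hm⟩
    obtain rfl : d = m + Pi.single 0 m' := by
      apply ha.injective_sum_intCast_smul
      simp only
      rw [shift_a, hd]
    rwa [shift_b] at hband
  · rintro hdio _ ⟨c, rfl, hc⟩
    refine ⟨c + Pi.single 0 m', by rw [shift_a], ?_⟩
    rw [shift_b]
    exact hdio c hc

theorem period_iff_diophantine (n : ℕ) [NeZero n]
    (y₀ : ℝ) (hy₀ : 0 < y₀) (b₀ : ℝ) (hb₀ : 0 < b₀)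
    (a : Fin n → (Fin n → ℝ)) (bv : Fin n → ℝ) (ha : LinearIndependent ℝ a)
    (L : Set ((Fin n → ℝ) × ℝ))
    (hL : L = (Submodule.span ℤ (insert ((0 : Fin n → ℝ), b₀)
          (Set.range fun i : Fin n => ((a i, bv i) : _ × ℝ))) : Set _))
    (hmin : ∀ b' : ℝ, b' ≠ 0 → ((0 : Fin n → ℝ), b') ∈ L → b₀ ≤ |b'|)
    (p : Fin n → ℝ) (m' : ℤ) (hm' : 0 < m') (hpa : (m' : ℝ) • a 0 = p)
    (hp0 : ((p, (0 : ℝ)) : _ × ℝ) ∉ L) :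
    (∀ x ∈ projBand n L y₀, x + p ∈ projBand n L y₀) ↔
      (∀ m : Fin n → ℤ,
        inBandMod (∑ i, (m i : ℝ) * bv i) y₀ b₀ →
        inBandMod ((m' : ℝ) * bv 0 + ∑ i, (m i : ℝ) * bv i) y₀ b₀) :=
  period_iff_diophantine_general n y₀ b₀ a bv ha L hL p m' hpa
end

section
/- Let L be a lattice in R^{n+1} invariant under σ(x,y)=(x,−y), with (0,b) ∈ L minimal in its vertical direction, b > 0. Suppose (p,q) ∈ L with y_0/2 < q ≤ y_0 and b = 2q. Then for every (x,y) ∈ L with 0 < y ≤ y_0, one has y = q, and consequently (x+p,0) ∈ L, so p is a period of P(L ∩ B_{y_0}). -/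
/-!
Reflecting a lattice point `v = (x, y)` and subtracting gives the vertical vector `(0, 2y)`.
Applied to `(x, y) - (p, q)` this puts `(0, 2(y - q))` in the lattice, and for `0 < y ≤ y₀ < 2q`
its length is below `b = 2q`, so minimality of `(0, b)` forces `y = q`.
Then `(x, q) + σ(p, q) = (x + p, 0)`.
-/

theorem IsLatticeIn.exists_addSubgroup_eq {V : Type*} [AddCommGroup V] [Module ℝ V] {m : ℕ}
    {L : Set V} (hL : IsLatticeIn m L) : ∃ G : AddSubgroup V, (G : Set V) = L := by
  obtain ⟨v, -, rfl⟩ := hL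
  exact ⟨(Submodule.span ℤ (Set.range v)).toAddSubgroup, rfl⟩

namespace AddSubgroup

variable {E : Type*} [AddCommGroup E] {G : AddSubgroup (E × ℝ)}

theorem mk_zero_two_mul_mem (hG : ∀ v ∈ G, (v.1, -v.2) ∈ G) {x : E} {y : ℝ}
    (hxy : (x, y) ∈ G) : ((0 : E), 2 * y) ∈ G := by
  have h := G.sub_mem hxy (hG _ hxy)
  rwa [Prod.mk_sub_mk, sub_self, sub_neg_eq_add, ← two_mul] at h

theorem snd_eq_of_abs_sub_lt (hG : ∀ v ∈ G, (v.1, -v.2) ∈ G) {p x : E} {q y : ℝ}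
    (hmin : ∀ b' : ℝ, b' ≠ 0 → ((0 : E), b') ∈ G → 2 * q ≤ |b'|)
    (hpq : (p, q) ∈ G) (hxy : (x, y) ∈ G) (hlt : |y - q| < q) : y = q := by
  by_contra hne
  have hvert : ((0 : E), 2 * (y - q)) ∈ G := mk_zero_two_mul_mem hG (G.sub_mem hxy hpq)
  have hb := hmin _ (by intro h; apply hne; linarith) hvert
  rw [abs_mul, abs_two] at hb
  linarith

end AddSubgroup

theorem heights_forced_and_period_general (n : ℕ)
    (L : Set ((Fin n → ℝ) × ℝ)) (hL : IsLatticeIn (n + 1) L)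
    (hσ : sigmaRefl n '' L = L)
    (b : ℝ)
    (hmin : ∀ b' : ℝ, b' ≠ 0 → ((0 : Fin n → ℝ), b') ∈ L → b ≤ |b'|)
    (y₀ : ℝ)
    (p : Fin n → ℝ) (q : ℝ) (hpq : ((p, q) : _ × ℝ) ∈ L)
    (hq₁ : y₀ / 2 < q) (hq₂ : q ≤ y₀) (hbq : b = 2 * q) :
    (∀ x : Fin n → ℝ, ∀ y : ℝ, ((x, y) : _ × ℝ) ∈ L → 0 < y → y ≤ y₀ → y = q) ∧
    (∀ x : Fin n → ℝ, ∀ y : ℝ, ((x, y) : _ × ℝ) ∈ L → 0 < y → y ≤ y₀ →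
      ((x + p, (0 : ℝ)) : _ × ℝ) ∈ L) ∧
    (∀ x ∈ projBand n L y₀, x + p ∈ projBand n L y₀) := by
  obtain ⟨G, rfl⟩ := hL.exists_addSubgroup_eq
  subst hbq
  have hrefl : ∀ v ∈ G, (v.1, -v.2) ∈ G := fun v hv => hσ.subset ⟨v, hv, rfl⟩
  have height : ∀ x y, ((x, y) : _ × ℝ) ∈ G → 0 < y → y ≤ y₀ → y = q :=
    fun x y hxy hy hyy => G.snd_eq_of_abs_sub_lt hrefl hmin hpq hxy
      (abs_sub_lt_iff.mpr ⟨by linarith, by linarith⟩)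
  have period : ∀ x y, ((x, y) : _ × ℝ) ∈ G → 0 < y → y ≤ y₀ →
      ((x + p, (0 : ℝ)) : _ × ℝ) ∈ G := by
    intro x y hxy hy hyy
    obtain rfl := height x y hxy hy hyy
    simpa using G.add_mem hxy (hrefl _ hpq)
  refine ⟨height, period, ?_⟩
  rintro x ⟨y, hy, hyy, hxy⟩
  rcases hy.eq_or_lt with rfl | hy
  · exact ⟨q, by linarith, hq₂, by simpa using G.add_mem hxy hpq⟩
  · exact ⟨0, le_rfl, hy.le.trans hyy, period x y hxy hy hyy⟩

theorem heights_forced_and_period (n : ℕ)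
    (L : Set ((Fin n → ℝ) × ℝ)) (hL : IsLatticeIn (n + 1) L)
    (hσ : sigmaRefl n '' L = L)
    (b : ℝ) (hb : 0 < b) (hbL : ((0 : Fin n → ℝ), b) ∈ L)
    (hmin : ∀ b' : ℝ, b' ≠ 0 → ((0 : Fin n → ℝ), b') ∈ L → b ≤ |b'|)
    (y₀ : ℝ) (hy₀ : 0 < y₀)
    (p : Fin n → ℝ) (q : ℝ) (hpq : ((p, q) : _ × ℝ) ∈ L)
    (hq₁ : y₀ / 2 < q) (hq₂ : q ≤ y₀) (hbq : b = 2 * q) :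
    (∀ x : Fin n → ℝ, ∀ y : ℝ, ((x, y) : _ × ℝ) ∈ L → 0 < y → y ≤ y₀ → y = q) ∧
    (∀ x : Fin n → ℝ, ∀ y : ℝ, ((x, y) : _ × ℝ) ∈ L → 0 < y → y ≤ y₀ →
      ((x + p, (0 : ℝ)) : _ × ℝ) ∈ L) ∧
    (∀ x ∈ projBand n L y₀, x + p ∈ projBand n L y₀) :=
  heights_forced_and_period_general n L hL hσ b hmin y₀ p q hpq hq₁ hq₂ hbq
end

section
/- Let Γ ⊆ E(n+1) be a crystallographic group with lattice L containing (0,y_0), and suppose ((v_1,y_1),σ) ∈ Γ with v_1 ∉ P(L), where σ(x,y)=(x,−y). Write L = {(0,a), l_1, …, l_n}_Z with P(l_i) linearly independent. Then there exists v_2 = Σ s_i P(l_i) with each s_i ∈ {0, 1/2}, not all zero, such that P(L) ∪ (v_2 + P(L)) is a lattice in R^n containing P(L) as an index-2 sublattice. -/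
/-!
Squaring the glide reflection `((v₁, y₁), σ)` gives the pure translation `((2 v₁, 0), id)`, so
`2 v₁` lies in the projected lattice `P(L) = span_ℤ {P(lᵢ)}`. Writing `2 v₁ = ∑ cᵢ P(lᵢ)` and reducing
the `cᵢ` modulo `2` yields `v₂ = ∑ (cᵢ mod 2)/2 · P(lᵢ) ≡ v₁ (mod P(L))`; since `2 v₂ ∈ P(L)`, every
integer multiple of `v₂` lies in `P(L)` or in `v₂ + P(L)`.
-/

/-- The linear map `σ(x,y) = (x,-y)` on `ℝⁿ × ℝ`. -/
def sigmaMap (n : ℕ) : ((Fin n → ℝ) × ℝ) →ₗ[ℝ] ((Fin n → ℝ) × ℝ) :=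
  (LinearMap.fst ℝ (Fin n → ℝ) ℝ).prod (-(LinearMap.snd ℝ (Fin n → ℝ) ℝ))

open Submodule

theorem coe_span_union_image_add_eq_span_insert {V : Type*} [AddCommGroup V] (v : V) (S : Set V)
    (h2 : (2 : ℤ) • v ∈ span ℤ S) :
    (span ℤ S : Set V) ∪ ((fun x => v + x) '' (span ℤ S)) = (span ℤ (insert v S) : Set V) := by
  ext x
  constructor
  · rintro (hx | ⟨y, hy, rfl⟩)
    · exact span_mono (Set.subset_insert _ _) hx
    · exact add_mem (subset_span (Set.mem_insert _ _)) (span_mono (Set.subset_insert _ _) hy)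
  · intro hx
    rw [SetLike.mem_coe, mem_span_insert] at hx
    obtain ⟨k, z, hz, rfl⟩ := hx
    obtain ⟨q, rfl | rfl⟩ := Int.even_or_odd' k
    · left
      rw [SetLike.mem_coe, mul_comm, mul_smul]
      exact add_mem (smul_mem _ q h2) hz
    · right
      refine ⟨q • (2 : ℤ) • v + z, add_mem (smul_mem _ q h2) hz, ?_⟩
      simp only [add_smul, one_smul, mul_comm 2 q, mul_smul]
      abel

theorem image_fst_span_insert_zero {R M N : Type*} [Semiring R] [AddCommMonoid M]
    [AddCommMonoid N] [Module R M] [Module R N] (b : N) (S : Set (M × N)) :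
    Prod.fst '' (span R (insert (0, b) S) : Set (M × N)) = span R (Prod.fst '' S) := by
  change LinearMap.fst R M N '' _ = _
  rw [← map_coe, map_span, Set.image_insert_eq, LinearMap.fst_apply, span_insert_zero]
  rfl

theorem exists_half_coeffs_sub_mem_span {ι V : Type*} [Fintype ι] [AddCommGroup V] [Module ℝ V]
    (b : ι → V) {v : V} (hv : (2 : ℝ) • v ∈ span ℤ (Set.range b)) :
    ∃ s : ι → ℝ, (∀ i, s i = 0 ∨ s i = 1 / 2) ∧ v - ∑ i, s i • b i ∈ span ℤ (Set.range b) := by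
  obtain ⟨c, hc⟩ := (mem_span_range_iff_exists_fun ℤ).1 hv
  refine ⟨fun i => ((c i % 2 : ℤ) : ℝ) / 2, fun i => ?_, ?_⟩
  · rcases Int.emod_two_eq (c i) with h | h <;> simp [h]
  have hv_half : v = ∑ i, ((c i : ℝ) / 2) • b i := by
    calc v = (1 / 2 : ℝ) • (2 : ℝ) • v := by rw [smul_smul]; norm_num
      _ = ∑ i, ((c i : ℝ) / 2) • b i := by
        simp only [← hc, Finset.smul_sum, ← Int.cast_smul_eq_zsmul ℝ, smul_smul]
        congr! 2
        ring
  have hdiff : v - ∑ i, (((c i % 2 : ℤ) : ℝ) / 2) • b i = ∑ i, (c i / 2) • b i := by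
    rw [hv_half, ← Finset.sum_sub_distrib]
    refine Finset.sum_congr rfl fun i _ => ?_
    rw [← sub_smul, ← Int.cast_smul_eq_zsmul ℝ]
    congr 1
    have hdiv : ((c i / 2 : ℤ) : ℝ) * 2 + ((c i % 2 : ℤ) : ℝ) = c i := by
      exact_mod_cast Int.ediv_mul_add_emod (c i) 2
    linarith
  rw [hdiff]
  exact (mem_span_range_iff_exists_fun ℤ).2 ⟨_, rfl⟩

theorem sigmaMap_comp_self (n : ℕ) : sigmaMap n ∘ₗ sigmaMap n = LinearMap.id := by
  ext x <;> simp [sigmaMap]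

theorem add_sigmaMap_self {n : ℕ} (v : Fin n → ℝ) (y : ℝ) :
    (v, y) + sigmaMap n (v, y) = ((2 : ℝ) • v, 0) := by
  simp [sigmaMap, two_smul]

theorem projected_lattice_index_two_general (n : ℕ)
    (Γ : Set (((Fin n → ℝ) × ℝ) × (((Fin n → ℝ) × ℝ) →ₗ[ℝ] ((Fin n → ℝ) × ℝ))))
    (hmul : ∀ v₁ δ₁ v₂ δ₂, (v₁, δ₁) ∈ Γ → (v₂, δ₂) ∈ Γ → (v₁ + δ₁ v₂, δ₁ ∘ₗ δ₂) ∈ Γ)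
    (L : Set ((Fin n → ℝ) × ℝ))
    (hLdef : L = {v | (v, (LinearMap.id : ((Fin n → ℝ) × ℝ) →ₗ[ℝ] _)) ∈ Γ})
    (a : ℝ) (l : Fin n → (Fin n → ℝ) × ℝ)
    (hL : L = (Submodule.span ℤ (insert ((0 : Fin n → ℝ), a) (Set.range l)) : Set _))
    (v₁ : Fin n → ℝ) (y₁ : ℝ) (hσ : (((v₁, y₁) : _ × ℝ), sigmaMap n) ∈ Γ)
    (hv₁ : v₁ ∉ Prod.fst '' L) :
    ∃ s : Fin n → ℝ, (∀ i, s i = 0 ∨ s i = 1 / 2) ∧ s ≠ 0 ∧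
      (Prod.fst '' L) ∪ ((fun x => (∑ i, s i • (l i).1) + x) '' (Prod.fst '' L)) =
        (Submodule.span ℤ (insert (∑ i, s i • (l i).1)
          (Set.range fun i => (l i).1)) : Set (Fin n → ℝ)) ∧
      (∑ i, s i • (l i).1) ∉ Prod.fst '' L ∧
      (2 : ℝ) • (∑ i, s i • (l i).1) ∈ Prod.fst '' L := by
  have hPL : Prod.fst '' L = span ℤ (Set.range fun i => (l i).1) := by
    rw [hL, image_fst_span_insert_zero, ← Set.range_comp]
    rfl
  have h2v₁ : (2 : ℝ) • v₁ ∈ Prod.fst '' L := by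
    have hsq := hmul _ _ _ _ hσ hσ
    rw [sigmaMap_comp_self, add_sigmaMap_self] at hsq
    exact ⟨_, by rw [hLdef]; exact hsq, rfl⟩
  rw [hPL] at hv₁ h2v₁ ⊢
  obtain ⟨s, hs, hsub⟩ := exists_half_coeffs_sub_mem_span _ h2v₁
  set v₂ := ∑ i, s i • (l i).1
  have hv₂ : v₂ ∉ span ℤ (Set.range fun i => (l i).1) :=
    fun h => hv₁ (by simpa using add_mem hsub h)
  have h2v₂ : (2 : ℝ) • v₂ ∈ span ℤ (Set.range fun i => (l i).1) := by
    have h : (2 : ℝ) • v₂ = (2 : ℝ) • v₁ - (2 : ℤ) • (v₁ - v₂) := by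
      simp only [two_smul]
      abel
    exact h ▸ sub_mem h2v₁ (smul_mem _ 2 hsub)
  refine ⟨s, hs, ?_, ?_, hv₂, h2v₂⟩
  · rintro rfl
    exact hv₂ (by simp [v₂])
  · exact coe_span_union_image_add_eq_span_insert v₂ _ (by rwa [two_smul, ← two_smul ℝ])

theorem projected_lattice_index_two (n : ℕ)
    (Γ : Set (((Fin n → ℝ) × ℝ) × (((Fin n → ℝ) × ℝ) →ₗ[ℝ] ((Fin n → ℝ) × ℝ))))
    (hmul : ∀ v₁ δ₁ v₂ δ₂, (v₁, δ₁) ∈ Γ → (v₂, δ₂) ∈ Γ → (v₁ + δ₁ v₂, δ₁ ∘ₗ δ₂) ∈ Γ)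
    (L : Set ((Fin n → ℝ) × ℝ))
    (hLdef : L = {v | (v, (LinearMap.id : ((Fin n → ℝ) × ℝ) →ₗ[ℝ] _)) ∈ Γ})
    (a : ℝ) (ha : a ≠ 0) (l : Fin n → (Fin n → ℝ) × ℝ)
    (hind : LinearIndependent ℝ fun i => (l i).1)
    (hL : L = (Submodule.span ℤ (insert ((0 : Fin n → ℝ), a) (Set.range l)) : Set _))
    (y₀ : ℝ) (hy₀ : ((0 : Fin n → ℝ), y₀) ∈ L)
    (v₁ : Fin n → ℝ) (y₁ : ℝ) (hσ : (((v₁, y₁) : _ × ℝ), sigmaMap n) ∈ Γ)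
    (hv₁ : v₁ ∉ Prod.fst '' L) :
    ∃ s : Fin n → ℝ, (∀ i, s i = 0 ∨ s i = 1 / 2) ∧ s ≠ 0 ∧
      (Prod.fst '' L) ∪ ((fun x => (∑ i, s i • (l i).1) + x) '' (Prod.fst '' L)) =
        (Submodule.span ℤ (insert (∑ i, s i • (l i).1)
          (Set.range fun i => (l i).1)) : Set (Fin n → ℝ)) ∧
      (∑ i, s i • (l i).1) ∉ Prod.fst '' L ∧
      (2 : ℝ) • (∑ i, s i • (l i).1) ∈ Prod.fst '' L :=
  projected_lattice_index_two_general n Γ hmul L hLdef a l hL v₁ y₁ hσ hv₁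
end

section
/- Let L_T = {(1,0,0), (1/2, √3/2, 0), (1,1,1)}_Z ⊂ R³. Then for every y_0 > 0 and every p in the hexagonal lattice H = {(1,0),(1/2,√3/2)}_Z ⊂ R², p is a period of P(L_T ∩ B_{y_0}), where P(x,y,z)=(x,y) and B_{y_0} = {(x,y,z) : 0 ≤ z ≤ y_0}. Moreover L_T ∩ {(0,0,z) : z ∈ R} = {(0,0,0)}. -/
/-- The triclinic lattice `L_T = {(1,0,0), (1/2,√3/2,0), (1,1,1)}_ℤ ⊂ ℝ³`,
modelled in `ℝ² × ℝ`. -/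
def triclinicLT : Set ((Fin 2 → ℝ) × ℝ) :=
  (Submodule.span ℤ ({((![1, 0] : Fin 2 → ℝ), (0 : ℝ)),
      ((![1 / 2, Real.sqrt 3 / 2] : Fin 2 → ℝ), (0 : ℝ)),
      ((![1, 1] : Fin 2 → ℝ), (1 : ℝ))} : Set ((Fin 2 → ℝ) × ℝ)) : Set ((Fin 2 → ℝ) × ℝ))

/-- The standard planar hexagonal lattice. -/
def hexLattice : Set (Fin 2 → ℝ) :=
  (Submodule.span ℤ ({(![1, 0] : Fin 2 → ℝ),
      (![1 / 2, Real.sqrt 3 / 2] : Fin 2 → ℝ)} : Set (Fin 2 → ℝ)) : Set (Fin 2 → ℝ))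

/-!
The first two generators of `L_T` are the generators of `H` placed at height `0`, so
`H × {0} ⊆ L_T` and translating a lattice point by `(p, 0)` keeps its height. On the vertical
axis, a lattice point `a e₁ + b e₂ + c e₃` has second planar coordinate `b √3 / 2 + c = 0`; since
`√3` is irrational this forces `b = c = 0`, so its height `c` vanishes.
-/

theorem Irrational.eq_zero_of_intCast_mul_eq_intCast {x : ℝ} (hx : Irrational x) {m n : ℤ}
    (h : (m : ℝ) * x = n) : m = 0 := by
  by_contra hm
  exact (hx.intCast_mul hm).ne_int n h

theorem mk_zero_mem_triclinicLT {p : Fin 2 → ℝ} (hp : p ∈ hexLattice) :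
    (p, (0 : ℝ)) ∈ triclinicLT := by
  obtain ⟨s, t, rfl⟩ := Submodule.mem_span_pair.mp hp
  exact Submodule.mem_span_triple.mpr ⟨s, t, 0, by simp⟩

theorem add_mk_zero_mem_triclinicLT {x p : Fin 2 → ℝ} {z : ℝ} (hx : (x, z) ∈ triclinicLT)
    (hp : p ∈ hexLattice) : (x + p, z) ∈ triclinicLT := by
  rw [← add_zero z]
  exact Submodule.add_mem _ hx (mk_zero_mem_triclinicLT hp)

theorem eq_zero_of_mem_triclinicLT_of_fst_eq_zero {v : (Fin 2 → ℝ) × ℝ}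
    (hv : v ∈ triclinicLT) (h : v.1 = 0) : v = 0 := by
  refine Prod.ext h ?_
  obtain ⟨a, b, c, rfl⟩ := Submodule.mem_span_triple.mp hv
  have h1 : (b : ℝ) * (√3 / 2) + c = 0 := by simpa using congrFun h 1
  have hbc : (b : ℝ) * √3 = (-2 * c : ℤ) := by push_cast; linarith
  have hb : b = 0 := Nat.prime_three.irrational_sqrt.eq_zero_of_intCast_mul_eq_intCast hbc
  have hc : c = 0 := by simpa [hb] using hbc
  simp [hc]

theorem triclinic_projects_to_hexagonal :
    (∀ y₀ : ℝ, 0 < y₀ → ∀ p ∈ hexLattice,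
      ∀ x : Fin 2 → ℝ, (∃ z : ℝ, 0 ≤ z ∧ z ≤ y₀ ∧ ((x, z) : _ × ℝ) ∈ triclinicLT) →
        (∃ z : ℝ, 0 ≤ z ∧ z ≤ y₀ ∧ ((x + p, z) : _ × ℝ) ∈ triclinicLT)) ∧
    {v : (Fin 2 → ℝ) × ℝ | v ∈ triclinicLT ∧ v.1 = 0} = {((0 : Fin 2 → ℝ), (0 : ℝ))} := by
  refine ⟨fun y₀ _ p hp x ⟨z, hz0, hzy, hx⟩ => ⟨z, hz0, hzy, add_mk_zero_mem_triclinicLT hx hp⟩, ?_⟩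
  ext v
  constructor
  · rintro ⟨hv, h⟩
    exact eq_zero_of_mem_triclinicLT_of_fst_eq_zero hv h
  · rintro rfl
    exact ⟨Submodule.zero_mem _, rfl⟩
end
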